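/- Let F be a simple closed dot-diagram over a monoidal signature Σ, and let ⟦−⟧_F be the interpretation over the polynomial ring ℤ[X_b : b ∈ B^F] defined by ⟦A⟧_F := ℓ_d^{-1}(A) and ⟦f⟧_F := Σ_{b ∈ ℓ_b^{-1}(f)} f_b, where f_b has entry X_b at the wiring position of the box b and 0 elsewhere. Then the coefficient of the monomial ∏_{b ∈ B^F} X_b in ⟦F⟧_F equals the number of automorphisms of the dot-diagram F. In particular this coefficient is strictly positive. -/

import Mathlib

open scoped Classical

/-- A monoidal signature: object labels and morphism labels with domain/codomain arities. -/
structure Signature where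
  Obj : Type
  Mor : Type
  dom : Mor → List Obj
  cod : Mor → List Obj

/-- A dot-diagram over a signature `σ`: finite sets of boxes and dots, lists of diagram
inputs and outputs, labelling functions, and wiring functions sending each box input/output
and each diagram input/output to a dot, subject to the typing conditions. -/
structure DotDiagram (σ : Signature) where
  B : Type
  D : Type
  fB : Fintype B
  fD : Fintype D
  dB : DecidableEq B
  dD : DecidableEq D
  lb : B → σ.Mor
  ld : D → σ.Obj
  nIn : ℕ
  nOut : ℕ
  win : (b : B) → Fin (σ.dom (lb b)).length → D
  wout : (b : B) → Fin (σ.cod (lb b)).length → D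
  pin : Fin nIn → D
  pout : Fin nOut → D
  tyIn : ∀ b i, ld (win b i) = (σ.dom (lb b)).get i
  tyOut : ∀ b j, ld (wout b j) = (σ.cod (lb b)).get j

attribute [instance] DotDiagram.fB DotDiagram.fD DotDiagram.dB DotDiagram.dD

namespace DotDiagram

variable {σ : Signature}

/-- A dot-diagram is closed when it has no diagram inputs or outputs. -/
def Closed (F : DotDiagram σ) : Prop := F.nIn = 0 ∧ F.nOut = 0

/-- A dot-diagram is simple when both wiring functions (on the disjoint union of box
ports and diagram ports) are surjective onto the dots. -/
def Simple (F : DotDiagram σ) : Prop :=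
  (∀ d : F.D, (∃ b i, F.win b i = d) ∨ (∃ k, F.pin k = d)) ∧
  (∀ d : F.D, (∃ b j, F.wout b j = d) ∨ (∃ k, F.pout k = d))

/-- A homomorphism of dot-diagrams: a pair of functions on boxes and dots respecting
the labellings, the wiring functions, and the connections to diagram inputs/outputs. -/
structure Hom (F G : DotDiagram σ) where
  onB : F.B → G.B
  onD : F.D → G.D
  map_lb : ∀ b, G.lb (onB b) = F.lb b
  map_ld : ∀ d, G.ld (onD d) = F.ld d
  map_win : ∀ (b : F.B) (i : Fin (σ.dom (F.lb b)).length),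
    G.win (onB b) (Fin.cast (by rw [map_lb b]) i) = onD (F.win b i)
  map_wout : ∀ (b : F.B) (j : Fin (σ.cod (F.lb b)).length),
    G.wout (onB b) (Fin.cast (by rw [map_lb b]) j) = onD (F.wout b j)
  eq_nIn : F.nIn = G.nIn
  eq_nOut : F.nOut = G.nOut
  map_pin : ∀ k, onD (F.pin k) = G.pin (Fin.cast eq_nIn k)
  map_pout : ∀ k, onD (F.pout k) = G.pout (Fin.cast eq_nOut k)

/-- Two dot-diagrams are isomorphic when there is a homomorphism between them which is
bijective on boxes and on dots. -/
def Isomorphic (F G : DotDiagram σ) : Prop :=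
  ∃ Φ : Hom F G, Function.Bijective Φ.onB ∧ Function.Bijective Φ.onD

end DotDiagram

/-- An interpretation of a signature over a commutative semiring `R`: a finite set for each
object label and a tensor of matrix entries for each morphism label. -/
structure Interp (σ : Signature) (R : Type) [CommSemiring R] where
  car : σ.Obj → Type
  finCar : ∀ A, Fintype (car A)
  val : (f : σ.Mor) →
    ((i : Fin (σ.dom f).length) → car ((σ.dom f).get i)) →
    ((j : Fin (σ.cod f).length) → car ((σ.cod f).get j)) → R

attribute [instance] Interp.finCar

namespace Interp

variable {σ : Signature} {R : Type} [CommSemiring R]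

/-- The tensor entry contributed by a box `b` under an assignment `φ` of dots. -/
def boxEntry (M : Interp σ R) (F : DotDiagram σ)
    (φ : (d : F.D) → M.car (F.ld d)) (b : F.B) : R :=
  M.val (F.lb b)
    (fun i => cast (congrArg M.car (F.tyIn b i)) (φ (F.win b i)))
    (fun j => cast (congrArg M.car (F.tyOut b j)) (φ (F.wout b j)))

/-- The scalar value of a closed dot-diagram: the sum over all assignments of elements to
dots of the product over boxes of the corresponding tensor entries. -/
noncomputable def value (M : Interp σ R) (F : DotDiagram σ) : R :=
  ∑ φ : ((d : F.D) → M.car (F.ld d)), ∏ b : F.B, M.boxEntry F φ b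

/-- The value matrix of a dot-diagram: the entry at a boundary assignment `(x; y)` is the
sum over all assignments of elements to dots compatible with the boundary of the product
over boxes of the corresponding tensor entries. -/
noncomputable def valueMatrix (M : Interp σ R) (F : DotDiagram σ)
    (x : Fin F.nIn → (Σ A : σ.Obj, M.car A))
    (y : Fin F.nOut → (Σ A : σ.Obj, M.car A)) : R :=
  ∑ φ : ((d : F.D) → M.car (F.ld d)),
    if (∀ k, (⟨F.ld (F.pin k), φ (F.pin k)⟩ : Σ A : σ.Obj, M.car A) = x k) ∧
       (∀ l, (⟨F.ld (F.pout l), φ (F.pout l)⟩ : Σ A : σ.Obj, M.car A) = y l)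
    then ∏ b : F.B, M.boxEntry F φ b else 0

end Interp

/-- The interpretation `⟦−⟧_F` over the polynomial ring `ℤ[X_b : b ∈ B^F]` determined by a
dot-diagram `F`: an object label `A` is interpreted by the set of dots of `F` labelled `A`,
and a morphism label `f` by `Σ_{b ∈ ℓ_b⁻¹(f)} f_b`, where `f_b` has entry `X_b` at the
wiring position of the box `b` and `0` elsewhere. -/
noncomputable def DotDiagram.interpF {σ : Signature} (F : DotDiagram σ) :
    Interp σ (MvPolynomial F.B ℤ) where
  car A := {d : F.D // F.ld d = A}
  finCar A := Subtype.fintype _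
  val f xs ys :=
    ∑ b : F.B,
      if h : F.lb b = f then
        (if (∀ i, (xs i).1 = F.win b (Fin.cast (by rw [h]) i)) ∧
            (∀ j, (ys j).1 = F.wout b (Fin.cast (by rw [h]) j))
         then MvPolynomial.X b else 0)
      else 0

namespace DotDiagram

variable {σ : Signature}

/-- The matching predicate extracted from `interpF.boxEntry`. -/
def matchP (F : DotDiagram σ) (φ : (d : F.D) → F.interpF.car (F.ld d)) (b b' : F.B) : Prop :=
  ∃ h : F.lb b' = F.lb b,
    (∀ i : Fin (σ.dom (F.lb b)).length,
        (φ (F.win b i)).1 = F.win b' (Fin.cast (by rw [h]) i)) ∧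
    (∀ j : Fin (σ.cod (F.lb b)).length,
        (φ (F.wout b j)).1 = F.wout b' (Fin.cast (by rw [h]) j))

lemma val_cast (F : DotDiagram σ) {A A' : σ.Obj} (h : A = A')
    (e : F.interpF.car A = F.interpF.car A') (x : F.interpF.car A) :
    (cast e x).1 = x.1 := by
  subst h
  rw [eq_of_heq (cast_heq e x)]

lemma boxEntry_interpF (F : DotDiagram σ)
    (φ : (d : F.D) → F.interpF.car (F.ld d)) (b : F.B) :
    F.interpF.boxEntry F φ b
      = ∑ b' : F.B, if F.matchP φ b b' then MvPolynomial.X b' else 0 := by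
  show (∑ b' : F.B,
      if h : F.lb b' = F.lb b then
        (if (∀ i, (cast (congrArg F.interpF.car (F.tyIn b i)) (φ (F.win b i))).1
                = F.win b' (Fin.cast (by rw [h]) i)) ∧
            (∀ j, (cast (congrArg F.interpF.car (F.tyOut b j)) (φ (F.wout b j))).1
                = F.wout b' (Fin.cast (by rw [h]) j))
         then MvPolynomial.X b' else 0)
      else 0) = _
  refine Finset.sum_congr rfl fun b' _ => ?_
  by_cases h : F.lb b' = F.lb b
  · rw [dif_pos h]
    refine if_congr ?_ rfl rfl
    constructor
    · rintro ⟨h1, h2⟩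
      exact ⟨h, fun i => by rw [← F.val_cast (F.tyIn b i)]; exact h1 i,
        fun j => by rw [← F.val_cast (F.tyOut b j)]; exact h2 j⟩
    · rintro ⟨h', h1, h2⟩
      exact ⟨fun i => by rw [F.val_cast (F.tyIn b i)]; exact h1 i,
        fun j => by rw [F.val_cast (F.tyOut b j)]; exact h2 j⟩
  · rw [dif_neg h, if_neg]
    rintro ⟨h', -⟩
    exact h h'

lemma sum_single_eq_iff {β : Type} [Fintype β] [DecidableEq β] (g : β → β) :
    (∑ b : β, Finsupp.single (g b) 1) = (∑ b : β, Finsupp.single b (1 : ℕ)) ↔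
      Function.Bijective g := by
  constructor
  · intro hsum
    rw [Function.bijective_iff_existsUnique]
    intro b'
    have happ := DFunLike.congr_fun hsum b'
    rw [Finset.sum_apply', Finset.sum_apply'] at happ
    simp only [Finsupp.single_apply] at happ
    rw [Finset.sum_ite_eq' Finset.univ b' (fun _ => 1), if_pos (Finset.mem_univ b')] at happ
    have hcard : (Finset.univ.filter fun b => g b = b').card = 1 := by
      rw [Finset.card_filter]
      exact happ
    obtain ⟨a, ha⟩ := Finset.card_eq_one.mp hcard
    refine ⟨a, ?_, ?_⟩
    · have : a ∈ Finset.univ.filter fun b => g b = b' := ha ▸ Finset.mem_singleton_self a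
      exact (Finset.mem_filter.mp this).2
    · intro y hy
      have : y ∈ Finset.univ.filter fun b => g b = b' :=
        Finset.mem_filter.mpr ⟨Finset.mem_univ y, hy⟩
      rw [ha, Finset.mem_singleton] at this
      exact this
  · intro hg
    exact Fintype.sum_bijective g hg _ _ fun b => rfl

lemma prod_X_eq {β : Type} [Fintype β] [DecidableEq β] (g : β → β) (s : Finset β) :
    (∏ b ∈ s, MvPolynomial.X (g b) : MvPolynomial β ℤ)
      = MvPolynomial.monomial (∑ b ∈ s, Finsupp.single (g b) 1) 1 := by
  classical
  induction s using Finset.induction with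
  | empty => simp
  | insert _ _ hnotmem ih =>
      rw [Finset.prod_insert hnotmem, Finset.sum_insert hnotmem, ih,
        ← pow_one (MvPolynomial.X _), MvPolynomial.X_pow_eq_monomial,
        MvPolynomial.monomial_mul, one_mul]

def finZeroElim' {n : ℕ} (h : n = 0) (k : Fin n) {C : Sort _} : C :=
  absurd k.isLt (by subst h; exact Nat.not_lt_zero _)

lemma onD_surj (F : DotDiagram σ) (hFs : F.Simple) (hFc : F.Closed)
    (φ : (d : F.D) → F.interpF.car (F.ld d)) (g : F.B → F.B)
    (hg : Function.Bijective g) (hm : ∀ b, F.matchP φ b (g b)) :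
    Function.Surjective (fun d => (φ d).1) := by
  intro d
  rcases hFs.1 d with ⟨b, i, hbi⟩ | ⟨k, -⟩
  · obtain ⟨b₀, rfl⟩ := hg.2 b
    obtain ⟨h, h1, -⟩ := hm b₀
    refine ⟨F.win b₀ (Fin.cast (by rw [h]) i), ?_⟩
    show (φ (F.win b₀ (Fin.cast (by rw [h]) i))).1 = d
    rw [h1, ← hbi]
    exact congrArg (F.win (g b₀)) (Fin.ext rfl)
  · exact finZeroElim' hFc.1 k

lemma Hom.ext' {F G : DotDiagram σ} {Φ Ψ : Hom F G}
    (h1 : Φ.onB = Ψ.onB) (h2 : Φ.onD = Ψ.onD) : Φ = Ψ := by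
  cases Φ; cases Ψ
  cases h1; cases h2
  rfl

/-- The identity automorphism. -/
def idHom (F : DotDiagram σ) : Hom F F where
  onB := id
  onD := id
  map_lb _ := rfl
  map_ld _ := rfl
  map_win b i := congrArg (F.win b) (Fin.ext rfl)
  map_wout b j := congrArg (F.wout b) (Fin.ext rfl)
  eq_nIn := rfl
  eq_nOut := rfl
  map_pin k := (congrArg F.pin (Fin.ext rfl)).symm
  map_pout k := (congrArg F.pout (Fin.ext rfl)).symm

/-- The bijection between matching pairs and automorphisms. -/
noncomputable def autEquiv (F : DotDiagram σ) (hFs : F.Simple) (hFc : F.Closed) :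
    {p : ((d : F.D) → F.interpF.car (F.ld d)) × (F.B → F.B) //
        (∀ b, F.matchP p.1 b (p.2 b)) ∧ Function.Bijective p.2} ≃
    {Φ : Hom F F // Function.Bijective Φ.onB ∧ Function.Bijective Φ.onD} where
  toFun p :=
    ⟨{ onB := p.1.2
       onD := fun d => (p.1.1 d).1
       map_lb := fun b => (p.2.1 b).choose
       map_ld := fun d => (p.1.1 d).2
       map_win := fun b i => ((p.2.1 b).choose_spec.1 i).symm
       map_wout := fun b j => ((p.2.1 b).choose_spec.2 j).symm
       eq_nIn := rfl
       eq_nOut := rfl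
       map_pin := fun k => finZeroElim' hFc.1 k
       map_pout := fun k => finZeroElim' hFc.2 k },
     p.2.2,
     Finite.surjective_iff_bijective.mp (F.onD_surj hFs hFc p.1.1 p.1.2 p.2.2 p.2.1)⟩
  invFun Φp :=
    ⟨⟨fun d => ⟨Φp.1.onD d, Φp.1.map_ld d⟩, Φp.1.onB⟩,
     fun b => ⟨Φp.1.map_lb b, fun i => (Φp.1.map_win b i).symm,
       fun j => (Φp.1.map_wout b j).symm⟩,
     Φp.2.1⟩
  left_inv p := by
    apply Subtype.ext
    exact Prod.ext (funext fun d => rfl) rfl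
  right_inv Φp := by
    apply Subtype.ext
    exact Hom.ext' rfl rfl

end DotDiagram

/-- For a simple closed dot-diagram `F`, the coefficient of the monomial `∏_{b ∈ B^F} X_b`
in `⟦F⟧_F` equals the number of automorphisms of `F`; in particular it is strictly
positive. -/
theorem DotDiagram.magic_coefficient_self {σ : Signature} (F : DotDiagram σ)
    (hFs : F.Simple) (hFc : F.Closed) :
    (MvPolynomial.coeff (∑ b : F.B, Finsupp.single b 1) (F.interpF.value F) =
      (Nat.card {Φ : DotDiagram.Hom F F //
        Function.Bijective Φ.onB ∧ Function.Bijective Φ.onD} : ℤ)) ∧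
    0 < MvPolynomial.coeff (∑ b : F.B, Finsupp.single b 1) (F.interpF.value F) := by
  classical
  have hval : F.interpF.value F = ∑ φ : ((d : F.D) → F.interpF.car (F.ld d)),
      ∑ g : F.B → F.B,
        if ∀ b, F.matchP φ b (g b) then ∏ b : F.B, MvPolynomial.X (g b) else 0 := by
    unfold Interp.value
    refine Finset.sum_congr rfl fun φ _ => ?_
    calc ∏ b : F.B, F.interpF.boxEntry F φ b
        = ∏ b : F.B, ∑ b' : F.B, if F.matchP φ b b' then MvPolynomial.X b' else 0 :=
          Finset.prod_congr rfl fun b _ => F.boxEntry_interpF φ b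
      _ = ∑ g ∈ Fintype.piFinset (fun _ : F.B => (Finset.univ : Finset F.B)),
            ∏ b : F.B, if F.matchP φ b (g b) then MvPolynomial.X (g b) else 0 :=
          Finset.prod_univ_sum _ _
      _ = ∑ g : F.B → F.B,
            ∏ b : F.B, if F.matchP φ b (g b) then MvPolynomial.X (g b) else 0 := by
          rw [Fintype.piFinset_univ]
      _ = _ := Finset.sum_congr rfl fun g _ => by
          by_cases hg : ∀ b, F.matchP φ b (g b)
          · rw [if_pos hg]
            exact Finset.prod_congr rfl fun b _ => if_pos (hg b)
          · rw [if_neg hg]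
            push_neg at hg
            obtain ⟨b, hb⟩ := hg
            exact Finset.prod_eq_zero (Finset.mem_univ b) (if_neg hb)
  have hcoeff : MvPolynomial.coeff (∑ b : F.B, Finsupp.single b 1) (F.interpF.value F)
      = ∑ φ : ((d : F.D) → F.interpF.car (F.ld d)), ∑ g : F.B → F.B,
          if (∀ b, F.matchP φ b (g b)) ∧ Function.Bijective g then (1 : ℤ) else 0 := by
    rw [hval, MvPolynomial.coeff_sum]
    refine Finset.sum_congr rfl fun φ _ => ?_
    rw [MvPolynomial.coeff_sum]
    refine Finset.sum_congr rfl fun g _ => ?_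
    rw [apply_ite (MvPolynomial.coeff (∑ b : F.B, Finsupp.single b 1)),
      MvPolynomial.coeff_zero, prod_X_eq, MvPolynomial.coeff_monomial]
    by_cases h1 : ∀ b, F.matchP φ b (g b)
    · rw [if_pos h1]
      by_cases h2 : (∑ b : F.B, Finsupp.single (g b) 1) = ∑ b : F.B, Finsupp.single b 1
      · rw [if_pos h2, if_pos ⟨h1, (sum_single_eq_iff g).mp h2⟩]
      · rw [if_neg h2, if_neg fun hc => h2 ((sum_single_eq_iff g).mpr hc.2)]
    · rw [if_neg h1, if_neg fun hc => h1 hc.1]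
  have hmain : MvPolynomial.coeff (∑ b : F.B, Finsupp.single b 1) (F.interpF.value F) =
      (Nat.card {Φ : DotDiagram.Hom F F //
        Function.Bijective Φ.onB ∧ Function.Bijective Φ.onD} : ℤ) := by
    have hsp := Fintype.sum_prod_type
      (fun p : (((d : F.D) → F.interpF.car (F.ld d)) × (F.B → F.B)) =>
        if (∀ b, F.matchP p.1 b (p.2 b)) ∧ Function.Bijective p.2 then (1 : ℤ) else 0)
    rw [hcoeff, ← hsp, Finset.sum_boole,
      Nat.card_congr (F.autEquiv hFs hFc).symm, Nat.card_eq_fintype_card,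
      Fintype.card_subtype]
  refine ⟨hmain, ?_⟩
  rw [hmain]
  haveI : Finite {Φ : DotDiagram.Hom F F //
      Function.Bijective Φ.onB ∧ Function.Bijective Φ.onD} :=
    Finite.of_equiv _ (F.autEquiv hFs hFc)
  haveI : Nonempty {Φ : DotDiagram.Hom F F //
      Function.Bijective Φ.onB ∧ Function.Bijective Φ.onD} :=
    ⟨⟨F.idHom, Function.bijective_id, Function.bijective_id⟩⟩
  exact_mod_cast Nat.card_pos
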